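/- arXiv:cs/0410050 — 10 statements merged into one kernel-verified Lean document; each statement's English description precedes it below -/
import Mathlib

section
/- In a synchronous system in which the agent has perfect recall, if two runs are indistinguishable to the agent at time m+1 then they are indistinguishable at time m: for all runs r, r' ∈ ℛ and all times m, if r(m+1) = r'(m+1) then r(m) = r'(m). (Equivalently, the agent's information sets refine over time: (r,m+1) ∈ K(r',m+1) implies (r,m) ∈ K(r',m).) -/
/-! Synchrony forbids a run of the system from ever revisiting a local state, so nothing is
deleted when forming its local-state sequence: at time `m + 1` it is the full history
`r 0, …, r (m + 1)`. Perfect recall at time `m + 1` thus equates the full histories of `r` and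
`r'`, in particular their entries at time `m`. -/

open scoped Classical

namespace SBP

variable {L : Type*}

/-- A point: a run together with a time. -/
abbrev Point (L : Type*) := (ℕ → L) × ℕ

/-- The information set `K(r,m)`: all points `(r',m')` with `r' ∈ ℛ` and `r' m' = r m`. -/
def K (ℛ : Finset (ℕ → L)) (r : ℕ → L) (m : ℕ) : Set (Point L) :=
  {p | p.1 ∈ ℛ ∧ p.1 p.2 = r m}

/-- `ℛ(U)`: the runs of `ℛ` passing through some point of `U`. -/
noncomputable def runsOf (ℛ : Finset (ℕ → L)) (U : Set (Point L)) : Finset (ℕ → L) :=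
  ℛ.filter fun r' => ∃ m', (r', m') ∈ U

/-- A system is synchronous if indistinguishable points occur at the same time. -/
def Synchronous (ℛ : Finset (ℕ → L)) : Prop :=
  ∀ r ∈ ℛ, ∀ r' ∈ ℛ, ∀ m m' : ℕ, r m = r' m' → m = m'

/-- The local-state sequence of run `r` at time `m`:
`r 0, r 1, …, r m` with consecutive repetitions removed. -/
noncomputable def lseq (r : ℕ → L) (m : ℕ) : List L :=
  ((List.range (m + 1)).map r).destutter (· ≠ ·)

/-- Perfect recall: indistinguishable points have the same local-state sequence. -/
def PerfectRecall (ℛ : Finset (ℕ → L)) : Prop :=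
  ∀ r ∈ ℛ, ∀ r' ∈ ℛ, ∀ m m' : ℕ, r m = r' m' → lseq r m = lseq r' m'

/-- A run-based event: contains all points of a run or none of them. -/
def RunBased (U : Set (Point L)) : Prop :=
  ∀ (r' : ℕ → L) (k k' : ℕ), (r', k) ∈ U → (r', k') ∈ U

/-- The probability of a (finite) set of runs. -/
noncomputable def PrS (pr : (ℕ → L) → ℝ) (S : Finset (ℕ → L)) : ℝ := ∑ r ∈ S, pr r

/-- `n_{(r,m)}(r')`: the number of points of the information set `K(r,m)` lying on run `r'`. -/
noncomputable def npts (r : ℕ → L) (m : ℕ) (r' : ℕ → L) : ℕ :=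
  Nat.card {k : ℕ | r' k = r m}

/-- The Elga probability of a single point, for the agent at the point `(r,m)`. -/
noncomputable def elga (ℛ : Finset (ℕ → L)) (pr : (ℕ → L) → ℝ) (r : ℕ → L) (m : ℕ)
    (p : Point L) : ℝ :=
  if p ∈ K ℛ r m then
    pr p.1 / ∑ r'' ∈ runsOf ℛ (K ℛ r m), pr r'' * (npts r m r'' : ℝ)
  else 0

theorem Synchronous.injective {ℛ : Finset (ℕ → L)} (hsync : Synchronous ℛ) {r : ℕ → L}
    (hr : r ∈ ℛ) : Function.Injective r :=
  fun _ _ h => hsync r hr r hr _ _ h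

theorem lseq_of_injective {r : ℕ → L} (hr : Function.Injective r) (m : ℕ) :
    lseq r m = (List.range (m + 1)).map r :=
  List.destutter_of_isChain _ _ (List.nodup_range.map hr).isChain

theorem info_sets_refine_general (ℛ : Finset (ℕ → L))
    (hsync : Synchronous ℛ) (hrec : PerfectRecall ℛ)
    (r r' : ℕ → L) (hr : r ∈ ℛ) (hr' : r' ∈ ℛ) (m : ℕ)
    (h : r (m + 1) = r' (m + 1)) :
    r m = r' m := by
  have hhist := hrec r hr r' hr' (m + 1) (m + 1) h
  rw [lseq_of_injective (hsync.injective hr), lseq_of_injective (hsync.injective hr')] at hhist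
  exact List.map_inj_left.mp hhist m (List.mem_range.mpr (by omega))

/-- In a synchronous system in which the agent has perfect recall, runs that are
indistinguishable to the agent at time `m+1` are indistinguishable at time `m`. -/
theorem info_sets_refine (ℛ : Finset (ℕ → L)) (hne : ℛ.Nonempty)
    (hsync : Synchronous ℛ) (hrec : PerfectRecall ℛ)
    (r r' : ℕ → L) (hr : r ∈ ℛ) (hr' : r' ∈ ℛ) (m : ℕ)
    (h : r (m + 1) = r' (m + 1)) :
    r m = r' m :=
  info_sets_refine_general ℛ hsync hrec r r' hr hr' m h

end SBP
end

section
/- In a synchronous system, the Elga probability and the extended HT probability coincide at every point: for every point (r,m) with Pr(ℛ(K(r,m))) > 0 and every point (r',m') ∈ K(r,m), Pr^Elga_{(r,m)}({(r',m')}) = Pr({r'}) / (Pr(ℛ(K(r,m))) · n_{(r,m)}(r')), and in fact n_{(r,m)}(r') = 1 for every run r' ∈ ℛ(K(r,m)). -/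
open scoped Classical

namespace SBP

variable {L : Type*}

theorem npts_eq_one_of_injective {r r' : ℕ → L} {m m' : ℕ} (hinj : Function.Injective r')
    (hm' : r' m' = r m) : npts r m r' = 1 := by
  have hpts : {k : ℕ | r' k = r m} = {m'} := by
    ext k
    rw [Set.mem_ofPred_eq, Set.mem_singleton_iff, ← hm']
    exact hinj.eq_iff
  simp [npts, hpts]

theorem mem_runsOf {ℛ : Finset (ℕ → L)} {U : Set (Point L)} {p : Point L} (hpℛ : p.1 ∈ ℛ)
    (hpU : p ∈ U) : p.1 ∈ runsOf ℛ U :=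
  Finset.mem_filter.2 ⟨hpℛ, p.2, hpU⟩

theorem Synchronous.npts_eq_one {ℛ : Finset (ℕ → L)} (hsync : Synchronous ℛ) {r r' : ℕ → L}
    {m : ℕ} (hr' : r' ∈ runsOf ℛ (K ℛ r m)) : npts r m r' = 1 := by
  obtain ⟨hr'ℛ, m', -, hm'⟩ := Finset.mem_filter.1 hr'
  exact npts_eq_one_of_injective (hsync.injective hr'ℛ) hm'

theorem elga_eq_div_PrS_of_npts_eq_one {ℛ : Finset (ℕ → L)} {pr : (ℕ → L) → ℝ} {r : ℕ → L}
    {m : ℕ} (hone : ∀ r' ∈ runsOf ℛ (K ℛ r m), npts r m r' = 1) {p : Point L}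
    (hp : p ∈ K ℛ r m) : elga ℛ pr r m p = pr p.1 / PrS pr (runsOf ℛ (K ℛ r m)) := by
  have hden : ∑ r'' ∈ runsOf ℛ (K ℛ r m), pr r'' * (npts r m r'' : ℝ)
      = PrS pr (runsOf ℛ (K ℛ r m)) :=
    Finset.sum_congr rfl fun r'' hr'' => by rw [hone r'' hr'', Nat.cast_one, mul_one]
  rw [elga, if_pos hp, hden]

theorem elga_eq_htExt_of_synchronous_general (ℛ : Finset (ℕ → L))
    (hsync : Synchronous ℛ)
    (pr : (ℕ → L) → ℝ)
    (r : ℕ → L) (m : ℕ) :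
    (∀ p ∈ K ℛ r m,
        elga ℛ pr r m p =
          pr p.1 / (PrS pr (runsOf ℛ (K ℛ r m)) * (npts r m p.1 : ℝ))) ∧
    (∀ r' ∈ runsOf ℛ (K ℛ r m), npts r m r' = 1) := by
  have hone : ∀ r' ∈ runsOf ℛ (K ℛ r m), npts r m r' = 1 := fun _ => hsync.npts_eq_one
  refine ⟨fun p hp => ?_, hone⟩
  rw [elga_eq_div_PrS_of_npts_eq_one hone hp, hone p.1 (mem_runsOf hp.1 hp), Nat.cast_one,
    mul_one]

/-- In a synchronous system the Elga probability and the extended HT probability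
coincide at every point; moreover `n_{(r,m)}(r') = 1` for every run through `K(r,m)`. -/
theorem elga_eq_htExt_of_synchronous (ℛ : Finset (ℕ → L)) (hne : ℛ.Nonempty)
    (hsync : Synchronous ℛ)
    (pr : (ℕ → L) → ℝ) (hnn : ∀ r' ∈ ℛ, 0 ≤ pr r') (hsum : ∑ r' ∈ ℛ, pr r' = 1)
    (hfin : ∀ r' ∈ ℛ, ∀ s ∈ ℛ, ∀ m : ℕ, {k : ℕ | r' k = s m}.Finite)
    (r : ℕ → L) (hr : r ∈ ℛ) (m : ℕ)
    (hpos : 0 < PrS pr (runsOf ℛ (K ℛ r m))) :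
    (∀ p ∈ K ℛ r m,
        elga ℛ pr r m p =
          pr p.1 / (PrS pr (runsOf ℛ (K ℛ r m)) * (npts r m p.1 : ℝ))) ∧
    (∀ r' ∈ runsOf ℛ (K ℛ r m), npts r m r' = 1) :=
  elga_eq_htExt_of_synchronous_general ℛ hsync pr r m

end SBP
end

section
/- Let (r,m) be a point with Pr(ℛ(K(r,m))) > 0. The Elga probability Pr^Elga_{(r,m)} equals the extended HT probability on the points of K(r,m) if and only if n_{(r,m)}(r₁) = n_{(r,m)}(r₂) for all runs r₁, r₂ ∈ ℛ(K(r,m)) with Pr({r₁}) ≠ 0 and Pr({r₂}) ≠ 0. -/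
open scoped Classical

/-! On a point of `K(r,m)` lying on the run `r'`, both probabilities are `Pr(r')` divided by a
normalizer: `∑ Pr(r'') n(r'')` for Elga's rule and `Pr(ℛ(K)) n(r')` for the extended HT rule.
For a run of nonzero probability they agree iff `∑ Pr(r'') n(r'') = Pr(ℛ(K)) n(r')`, and this
holds for all such runs iff `n` is constant on the runs of nonzero probability. -/

theorem Finset.sum_mul_eq_sum_mul_of_forall_ne_zero {ι R : Type*} [NonUnitalNonAssocSemiring R]
    {S : Finset ι} {w n : ι → R} {c : R} (h : ∀ i ∈ S, w i ≠ 0 → n i = c) :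
    ∑ i ∈ S, w i * n i = (∑ i ∈ S, w i) * c := by
  rw [Finset.sum_mul]
  refine Finset.sum_congr rfl fun i hi => ?_
  by_cases hw : w i = 0
  · simp [hw]
  · rw [h i hi hw]

theorem div_right_inj₀ {K : Type*} [GroupWithZero K] {a x y : K} (ha : a ≠ 0) :
    a / x = a / y ↔ x = y := by
  rw [div_eq_mul_inv, div_eq_mul_inv, mul_right_inj' ha, inv_inj]

theorem Finset.forall_div_sum_mul_eq_div_sum_mul_iff {ι K : Type*} [Field K]
    {S : Finset ι} {w n : ι → K} (hS : ∑ j ∈ S, w j ≠ 0) :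
    (∀ i ∈ S, w i / ∑ j ∈ S, w j * n j = w i / ((∑ j ∈ S, w j) * n i)) ↔
      ∀ i ∈ S, ∀ j ∈ S, w i ≠ 0 → w j ≠ 0 → n i = n j := by
  constructor
  · intro h i hi j hj hwi hwj
    have hni := (div_right_inj₀ hwi).1 (h i hi)
    have hnj := (div_right_inj₀ hwj).1 (h j hj)
    exact mul_left_cancel₀ hS (hni.symm.trans hnj)
  · intro h i hi
    by_cases hwi : w i = 0
    · simp [hwi]
    · rw [Finset.sum_mul_eq_sum_mul_of_forall_ne_zero fun j hj hwj => h j hj i hi hwj hwi]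

namespace SBP

variable {L : Type*}

theorem forall_mem_iff_forall_mem_runsOf (ℛ : Finset (ℕ → L)) {U : Set (Point L)}
    (hU : ∀ p ∈ U, p.1 ∈ ℛ) {P : (ℕ → L) → Prop} :
    (∀ p ∈ U, P p.1) ↔ ∀ r' ∈ runsOf ℛ U, P r' := by
  constructor
  · intro h r' hr'
    obtain ⟨-, m', hm'⟩ := Finset.mem_filter.1 hr'
    exact h (r', m') hm'
  · intro h p hp
    exact h p.1 (Finset.mem_filter.2 ⟨hU p hp, p.2, hp⟩)

theorem elga_of_mem {ℛ : Finset (ℕ → L)} {pr : (ℕ → L) → ℝ} {r : ℕ → L} {m : ℕ} {p : Point L}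
    (hp : p ∈ K ℛ r m) :
    elga ℛ pr r m p = pr p.1 / ∑ r'' ∈ runsOf ℛ (K ℛ r m), pr r'' * (npts r m r'' : ℝ) :=
  if_pos hp

theorem elga_eq_htExt_iff_general (ℛ : Finset (ℕ → L))
    (pr : (ℕ → L) → ℝ)
    (r : ℕ → L) (m : ℕ)
    (hpos : 0 < PrS pr (runsOf ℛ (K ℛ r m))) :
    (∀ p ∈ K ℛ r m,
        elga ℛ pr r m p =
          pr p.1 / (PrS pr (runsOf ℛ (K ℛ r m)) * (npts r m p.1 : ℝ))) ↔
    (∀ r₁ ∈ runsOf ℛ (K ℛ r m), ∀ r₂ ∈ runsOf ℛ (K ℛ r m),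
        pr r₁ ≠ 0 → pr r₂ ≠ 0 → npts r m r₁ = npts r m r₂) := by
  set S := runsOf ℛ (K ℛ r m)
  calc (∀ p ∈ K ℛ r m, elga ℛ pr r m p = pr p.1 / (PrS pr S * npts r m p.1))
      ↔ ∀ p ∈ K ℛ r m, pr p.1 / ∑ r'' ∈ S, pr r'' * (npts r m r'' : ℝ) =
          pr p.1 / (PrS pr S * npts r m p.1) :=
        forall₂_congr fun p hp => by rw [elga_of_mem hp]
    _ ↔ ∀ r' ∈ S, pr r' / ∑ r'' ∈ S, pr r'' * (npts r m r'' : ℝ) =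
          pr r' / (PrS pr S * npts r m r') :=
        forall_mem_iff_forall_mem_runsOf ℛ (fun _ hp => hp.1)
          (P := fun r' => pr r' / ∑ r'' ∈ S, pr r'' * (npts r m r'' : ℝ) =
            pr r' / (PrS pr S * npts r m r'))
    _ ↔ ∀ r₁ ∈ S, ∀ r₂ ∈ S, pr r₁ ≠ 0 → pr r₂ ≠ 0 → (npts r m r₁ : ℝ) = npts r m r₂ :=
        Finset.forall_div_sum_mul_eq_div_sum_mul_iff hpos.ne'
    _ ↔ _ := by simp only [Nat.cast_inj]

/-- The Elga probability equals the extended HT probability on the points of `K(r,m)`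
iff all runs through `K(r,m)` of nonzero probability contain the same number of points
of `K(r,m)`. -/
theorem elga_eq_htExt_iff (ℛ : Finset (ℕ → L)) (hne : ℛ.Nonempty)
    (pr : (ℕ → L) → ℝ) (hnn : ∀ r' ∈ ℛ, 0 ≤ pr r') (hsum : ∑ r' ∈ ℛ, pr r' = 1)
    (hfin : ∀ r' ∈ ℛ, ∀ s ∈ ℛ, ∀ m : ℕ, {k : ℕ | r' k = s m}.Finite)
    (r : ℕ → L) (hr : r ∈ ℛ) (m : ℕ)
    (hpos : 0 < PrS pr (runsOf ℛ (K ℛ r m))) :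
    (∀ p ∈ K ℛ r m,
        elga ℛ pr r m p =
          pr p.1 / (PrS pr (runsOf ℛ (K ℛ r m)) * (npts r m p.1 : ℝ))) ↔
    (∀ r₁ ∈ runsOf ℛ (K ℛ r m), ∀ r₂ ∈ runsOf ℛ (K ℛ r m),
        pr r₁ ≠ 0 → pr r₂ ≠ 0 → npts r m r₁ = npts r m r₂) :=
  elga_eq_htExt_iff_general ℛ pr r m hpos

end SBP
end

section
/- Let (r,m) be a point with Pr(ℛ(K(r,m))) > 0. Then Pr^Elga_{(r,m)} is the unique probability measure Pr' on the points of K(r,m) satisfying the following proportionality condition: for all points (r₁,m₁), (r₂,m₂) ∈ K(r,m), if Pr({r₂}) > 0 then Pr'({(r₁,m₁)}) · Pr({r₂}) = Pr'({(r₂,m₂)}) · Pr({r₁}). In particular, Pr^Elga_{(r,m)} assigns equal probability to all points of K(r,m) lying on the same run. -/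
/-!
Counting the points of `K(r,m)` run by run, the Elga denominator `Σ Pr(r'') · n_{(r,m)}(r'')` is
the total weight `Σ_{p ∈ K(r,m)} Pr(p.1)`, so `Pr^Elga` is the weight `Pr(p.1)` normalized over
the finite set `K(r,m)`. Normalized nonnegative weights `w / Σ_S w` on a finite set `S` are the
only distribution on `S` proportional to `w`: summing `q a · w b = q b · w a` over `b ∈ S` gives
`q a · Σ_S w = w a` when `w a > 0`, and when `w a = 0`, comparing `a` with some `b` of positive
weight forces `q a = 0`.
-/

open scoped Classical

namespace SBP

variable {L : Type*}

section NormalizedWeight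

variable {α : Type*}

noncomputable def normalizedWeight (S : Finset α) (w : α → ℝ) (a : α) : ℝ :=
  if a ∈ S then w a / ∑ b ∈ S, w b else 0

variable {S : Finset α} {w : α → ℝ} {a : α}

theorem normalizedWeight_of_mem (ha : a ∈ S) :
    normalizedWeight S w a = w a / ∑ b ∈ S, w b :=
  if_pos ha

theorem normalizedWeight_of_notMem (ha : a ∉ S) : normalizedWeight S w a = 0 :=
  if_neg ha

theorem normalizedWeight_nonneg (hw : ∀ b ∈ S, 0 ≤ w b) (a : α) :
    0 ≤ normalizedWeight S w a := by
  unfold normalizedWeight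
  split_ifs with ha
  · exact div_nonneg (hw a ha) (Finset.sum_nonneg hw)
  · exact le_rfl

theorem finsum_normalizedWeight (hS : ∑ b ∈ S, w b ≠ 0) :
    ∑ᶠ a, normalizedWeight S w a = 1 := by
  rw [finsum_eq_finsetSum_of_support_subset _ <|
      Function.support_subset_iff'.mpr fun a => normalizedWeight_of_notMem,
    Finset.sum_congr rfl fun a ha => normalizedWeight_of_mem ha, ← Finset.sum_div, div_self hS]

theorem normalizedWeight_mul_eq_mul_normalizedWeight {b : α} (ha : a ∈ S) (hb : b ∈ S) :
    normalizedWeight S w a * w b = normalizedWeight S w b * w a := by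
  rw [normalizedWeight_of_mem ha, normalizedWeight_of_mem hb]
  ring

theorem eq_normalizedWeight_of_proportional {q : α → ℝ} (hw : ∀ a ∈ S, 0 ≤ w a)
    (hS : 0 < ∑ b ∈ S, w b) (hq_supp : ∀ a ∉ S, q a = 0) (hq_sum : ∑ᶠ a, q a = 1)
    (hq_prop : ∀ a ∈ S, ∀ b ∈ S, 0 < w b → q a * w b = q b * w a) :
    q = normalizedWeight S w := by
  rw [finsum_eq_finsetSum_of_support_subset q (Function.support_subset_iff'.mpr hq_supp)] at hq_sum
  funext a
  by_cases ha : a ∈ S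
  swap
  · rw [hq_supp a ha, normalizedWeight_of_notMem ha]
  rw [normalizedWeight_of_mem ha, eq_div_iff hS.ne']
  rcases (hw a ha).lt_or_eq with hpos | hzero
  · calc q a * ∑ b ∈ S, w b = ∑ b ∈ S, q b * w a := by
          rw [Finset.mul_sum]
          exact Finset.sum_congr rfl fun b hb => (hq_prop b hb a ha hpos).symm
      _ = w a := by rw [← Finset.sum_mul, hq_sum, one_mul]
  · obtain ⟨b, hb, hb_pos⟩ : ∃ b ∈ S, 0 < w b :=
      Finset.exists_lt_of_sum_lt (by simpa using hS)
    have hqa : q a = 0 := by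
      have h := hq_prop a ha b hb hb_pos
      rw [← hzero, mul_zero] at h
      exact (mul_eq_zero.mp h).resolve_right hb_pos.ne'
    rw [hqa, zero_mul, hzero]

end NormalizedWeight

section InformationSet

variable {ℛ : Finset (ℕ → L)} {r : ℕ → L} {m : ℕ}

theorem K_finite (hfin : ∀ r' ∈ ℛ, {k : ℕ | r' k = r m}.Finite) : (K ℛ r m).Finite := by
  refine (ℛ.finite_toSet.biUnion fun r' hr' => (hfin r' hr').image fun k => (r', k)).subset ?_
  rintro ⟨r', k⟩ ⟨hr', hk⟩
  exact Set.mem_biUnion hr' ⟨k, hk, rfl⟩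

theorem card_filter_fst_eq_npts (hK : (K ℛ r m).Finite) {r' : ℕ → L} (hr' : r' ∈ ℛ)
    (hfin : {k : ℕ | r' k = r m}.Finite) :
    ({p ∈ hK.toFinset | p.1 = r'} : Finset _).card = npts r m r' := by
  have hfiber : {p ∈ hK.toFinset | p.1 = r'} =
      hfin.toFinset.map ⟨fun k => (r', k), Prod.mk_right_injective r'⟩ := by
    ext ⟨s, k⟩
    simp only [Finset.mem_filter, Set.Finite.mem_toFinset, Finset.mem_map, K,
      Set.mem_ofPred_eq, Function.Embedding.coeFn_mk, Prod.mk.injEq]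
    constructor
    · rintro ⟨⟨-, hk⟩, rfl⟩
      exact ⟨k, hk, rfl, rfl⟩
    · rintro ⟨k, hk, rfl, rfl⟩
      exact ⟨⟨hr', hk⟩, rfl⟩
  rw [hfiber, Finset.card_map, npts, Nat.card_eq_card_finite_toFinset hfin]

theorem image_fst_K_eq_runsOf (hK : (K ℛ r m).Finite) :
    hK.toFinset.image Prod.fst = runsOf ℛ (K ℛ r m) := by
  ext r'
  simp only [Finset.mem_image, Set.Finite.mem_toFinset, runsOf, Finset.mem_filter, Prod.exists,
    exists_and_right, exists_eq_right]
  exact ⟨fun ⟨k, hk⟩ => ⟨hk.1, k, hk⟩, fun ⟨_, k, hk⟩ => ⟨k, hk⟩⟩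

theorem sum_K_eq_sum_runsOf_mul_npts (pr : (ℕ → L) → ℝ) (hK : (K ℛ r m).Finite)
    (hfin : ∀ r' ∈ ℛ, {k : ℕ | r' k = r m}.Finite) :
    ∑ p ∈ hK.toFinset, pr p.1 = ∑ r' ∈ runsOf ℛ (K ℛ r m), pr r' * (npts r m r' : ℝ) := by
  rw [Finset.sum_comp, image_fst_K_eq_runsOf hK]
  refine Finset.sum_congr rfl fun r' hr' => ?_
  have hr'ℛ : r' ∈ ℛ := (Finset.mem_filter.mp hr').1
  rw [card_filter_fst_eq_npts hK hr'ℛ (hfin r' hr'ℛ), nsmul_eq_mul, mul_comm]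

theorem elga_eq_normalizedWeight (pr : (ℕ → L) → ℝ) (hK : (K ℛ r m).Finite)
    (hfin : ∀ r' ∈ ℛ, {k : ℕ | r' k = r m}.Finite) :
    elga ℛ pr r m = normalizedWeight hK.toFinset fun p => pr p.1 := by
  funext p
  simp only [elga, normalizedWeight, Set.Finite.mem_toFinset,
    sum_K_eq_sum_runsOf_mul_npts pr hK hfin]

theorem sum_K_pos {pr : (ℕ → L) → ℝ} (hK : (K ℛ r m).Finite) (hnn : ∀ r' ∈ ℛ, 0 ≤ pr r')
    (hpos : 0 < PrS pr (runsOf ℛ (K ℛ r m))) : 0 < ∑ p ∈ hK.toFinset, pr p.1 := by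
  obtain ⟨r', hr', hr'_pos⟩ : ∃ r' ∈ runsOf ℛ (K ℛ r m), 0 < pr r' :=
    Finset.exists_lt_of_sum_lt (by simpa [PrS] using hpos)
  obtain ⟨-, k, hk⟩ := Finset.mem_filter.mp hr'
  exact Finset.sum_pos' (fun p hp => hnn p.1 (hK.mem_toFinset.mp hp).1)
    ⟨(r', k), hK.mem_toFinset.mpr hk, hr'_pos⟩

end InformationSet

theorem elga_unique_general (ℛ : Finset (ℕ → L))
    (pr : (ℕ → L) → ℝ) (hnn : ∀ r' ∈ ℛ, 0 ≤ pr r')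
    (hfin : ∀ r' ∈ ℛ, ∀ s ∈ ℛ, ∀ m : ℕ, {k : ℕ | r' k = s m}.Finite)
    (r : ℕ → L) (hr : r ∈ ℛ) (m : ℕ)
    (hpos : 0 < PrS pr (runsOf ℛ (K ℛ r m))) :
    (∀ p : Point L, 0 ≤ elga ℛ pr r m p) ∧
    (∀ p : Point L, p ∉ K ℛ r m → elga ℛ pr r m p = 0) ∧
    (∑ᶠ p : Point L, elga ℛ pr r m p) = 1 ∧
    (∀ p₁ ∈ K ℛ r m, ∀ p₂ ∈ K ℛ r m, 0 < pr p₂.1 →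
        elga ℛ pr r m p₁ * pr p₂.1 = elga ℛ pr r m p₂ * pr p₁.1) ∧
    (∀ q : Point L → ℝ,
        (∀ p : Point L, 0 ≤ q p) →
        (∀ p : Point L, p ∉ K ℛ r m → q p = 0) →
        (∑ᶠ p : Point L, q p) = 1 →
        (∀ p₁ ∈ K ℛ r m, ∀ p₂ ∈ K ℛ r m, 0 < pr p₂.1 →
            q p₁ * pr p₂.1 = q p₂ * pr p₁.1) →
        q = elga ℛ pr r m) ∧
    (∀ (r' : ℕ → L) (m₁ m₂ : ℕ), (r', m₁) ∈ K ℛ r m → (r', m₂) ∈ K ℛ r m →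
        elga ℛ pr r m (r', m₁) = elga ℛ pr r m (r', m₂)) := by
  have hfin' : ∀ r' ∈ ℛ, {k : ℕ | r' k = r m}.Finite := fun r' hr' => hfin r' hr' r hr m
  have hK := K_finite hfin'
  have hw : ∀ p ∈ hK.toFinset, 0 ≤ pr p.1 := fun p hp => hnn p.1 (hK.mem_toFinset.mp hp).1
  have hS := sum_K_pos hK hnn hpos
  rw [elga_eq_normalizedWeight pr hK hfin']
  simp only [← hK.mem_toFinset]
  refine ⟨normalizedWeight_nonneg hw, fun p => normalizedWeight_of_notMem,
    finsum_normalizedWeight hS.ne',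
    fun p₁ h₁ p₂ h₂ _ => normalizedWeight_mul_eq_mul_normalizedWeight h₁ h₂,
    fun q _ hq_supp hq_sum hq_prop =>
      eq_normalizedWeight_of_proportional hw hS hq_supp hq_sum hq_prop,
    fun r' m₁ m₂ h₁ h₂ => ?_⟩
  rw [normalizedWeight_of_mem h₁, normalizedWeight_of_mem h₂]

/-- `Pr^Elga_{(r,m)}` is the unique probability measure on the points of `K(r,m)`
satisfying the proportionality condition
`Pr'({(r₁,m₁)}) · Pr({r₂}) = Pr'({(r₂,m₂)}) · Pr({r₁})` (whenever `Pr({r₂}) > 0`);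
in particular it assigns equal probability to all points of `K(r,m)` on the same run. -/
theorem elga_unique (ℛ : Finset (ℕ → L)) (hne : ℛ.Nonempty)
    (pr : (ℕ → L) → ℝ) (hnn : ∀ r' ∈ ℛ, 0 ≤ pr r') (hsum : ∑ r' ∈ ℛ, pr r' = 1)
    (hfin : ∀ r' ∈ ℛ, ∀ s ∈ ℛ, ∀ m : ℕ, {k : ℕ | r' k = s m}.Finite)
    (r : ℕ → L) (hr : r ∈ ℛ) (m : ℕ)
    (hpos : 0 < PrS pr (runsOf ℛ (K ℛ r m))) :
    (∀ p : Point L, 0 ≤ elga ℛ pr r m p) ∧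
    (∀ p : Point L, p ∉ K ℛ r m → elga ℛ pr r m p = 0) ∧
    (∑ᶠ p : Point L, elga ℛ pr r m p) = 1 ∧
    (∀ p₁ ∈ K ℛ r m, ∀ p₂ ∈ K ℛ r m, 0 < pr p₂.1 →
        elga ℛ pr r m p₁ * pr p₂.1 = elga ℛ pr r m p₂ * pr p₁.1) ∧
    (∀ q : Point L → ℝ,
        (∀ p : Point L, 0 ≤ q p) →
        (∀ p : Point L, p ∉ K ℛ r m → q p = 0) →
        (∑ᶠ p : Point L, q p) = 1 →
        (∀ p₁ ∈ K ℛ r m, ∀ p₂ ∈ K ℛ r m, 0 < pr p₂.1 →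
            q p₁ * pr p₂.1 = q p₂ * pr p₁.1) →
        q = elga ℛ pr r m) ∧
    (∀ (r' : ℕ → L) (m₁ m₂ : ℕ), (r', m₁) ∈ K ℛ r m → (r', m₂) ∈ K ℛ r m →
        elga ℛ pr r m (r', m₁) = elga ℛ pr r m (r', m₂)) :=
  elga_unique_general ℛ pr hnn hfin r hr m hpos

end SBP
end

section
/- Let ℛ be a synchronous system in which the agent has perfect recall, and let U be a run-based event. For a point (r,m) with Pr(ℛ(K(r,m))) > 0, define the agent's point probability at (r,m) by Pr_{(r,m)}(V) = Pr(ℛ(V ∩ K(r,m))) / Pr(ℛ(K(r,m))) for any set V of points, and let K(r,m+1)⁻ = {(r',k) : (r',k+1) ∈ K(r,m+1)}. If Pr(ℛ(K(r,m))) > 0 and Pr(ℛ(K(r,m+1))) > 0, then the agent updates by conditioning: Pr_{(r,m+1)}(U) = Pr_{(r,m)}(U ∩ K(r,m+1)⁻) / Pr_{(r,m)}(K(r,m+1)⁻). -/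
open scoped Classical

namespace SBP

variable {L : Type*}

/-- `K⁻`: the set of points immediately preceding the points of `K ℛ r m`. -/
def Kminus (ℛ : Finset (ℕ → L)) (r : ℕ → L) (m : ℕ) : Set (Point L) :=
  {p | (p.1, p.2 + 1) ∈ K ℛ r m}

/-- The agent's point probability at `(r,m)`:
`Pr_{(r,m)}(V) = Pr(ℛ(V ∩ K(r,m))) / Pr(ℛ(K(r,m)))`. -/
noncomputable def prPt (ℛ : Finset (ℕ → L)) (pr : (ℕ → L) → ℝ) (r : ℕ → L) (m : ℕ)
    (V : Set (Point L)) : ℝ :=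
  PrS pr (runsOf ℛ (V ∩ K ℛ r m)) / PrS pr (runsOf ℛ (K ℛ r m))

section Aux

variable {L : Type*}

/-- In a synchronous system, no run repeats a state, hence `lseq` is just the trace. -/
lemma lseq_eq_map (ℛ : Finset (ℕ → L)) (hsync : Synchronous ℛ)
    (r : ℕ → L) (hr : r ∈ ℛ) (m : ℕ) :
    lseq r m = (List.range (m + 1)).map r := by
  unfold lseq
  apply List.destutter_of_isChain
  rw [List.isChain_map]
  refine (List.isChain_range_succ _ _).mpr fun i hi h => ?_
  exact absurd (hsync r hr r hr i (i + 1) h) (by omega)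

lemma sync_recall_step (ℛ : Finset (ℕ → L)) (hsync : Synchronous ℛ)
    (hrec : PerfectRecall ℛ) (r : ℕ → L) (hr : r ∈ ℛ) (m : ℕ)
    (r' : ℕ → L) (hr' : r' ∈ ℛ) (h : r' (m + 1) = r (m + 1)) :
    r' m = r m := by
  have hl := hrec r' hr' r hr (m + 1) (m + 1) h
  rw [lseq_eq_map ℛ hsync r' hr', lseq_eq_map ℛ hsync r hr] at hl
  have := congrArg (fun l : List L => l[m]?) hl
  simpa [List.getElem?_map, List.getElem?_range, Nat.lt_succ_iff] using this

end Aux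

/-- In a synchronous system with perfect recall, the agent updates by conditioning:
`Pr_{(r,m+1)}(U) = Pr_{(r,m)}(U ∩ K(r,m+1)⁻) / Pr_{(r,m)}(K(r,m+1)⁻)`
for every run-based event `U`. -/

theorem update_by_conditioning_sync (ℛ : Finset (ℕ → L)) (hne : ℛ.Nonempty)
    (hsync : Synchronous ℛ) (hrec : PerfectRecall ℛ)
    (pr : (ℕ → L) → ℝ) (hnn : ∀ r' ∈ ℛ, 0 ≤ pr r') (hsum : ∑ r' ∈ ℛ, pr r' = 1)
    (U : Set (Point L)) (hU : RunBased U)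
    (r : ℕ → L) (hr : r ∈ ℛ) (m : ℕ)
    (h1 : 0 < PrS pr (runsOf ℛ (K ℛ r m)))
    (h2 : 0 < PrS pr (runsOf ℛ (K ℛ r (m + 1)))) :
    prPt ℛ pr r (m + 1) U =
      prPt ℛ pr r m (U ∩ Kminus ℛ r (m + 1)) / prPt ℛ pr r m (Kminus ℛ r (m + 1)) := by
  set S1 : Finset (ℕ → L) := ℛ.filter (fun r' => r' m = r m) with hS1
  set S2 : Finset (ℕ → L) := ℛ.filter (fun r' => r' (m + 1) = r (m + 1)) with hS2
  set S2U : Finset (ℕ → L) :=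
    ℛ.filter (fun r' => r' (m + 1) = r (m + 1) ∧ (r', 0) ∈ U) with hS2U
  have e1 : runsOf ℛ (K ℛ r m) = S1 := by
    ext r'; simp only [runsOf, K, Finset.mem_filter, Set.mem_setOf_eq, hS1]
    constructor
    · rintro ⟨h', k, -, hk⟩
      exact ⟨h', by rwa [hsync r' h' r hr _ _ hk] at hk⟩
    · rintro ⟨h', hk⟩; exact ⟨h', m, h', hk⟩
  have e2 : runsOf ℛ (K ℛ r (m + 1)) = S2 := by
    ext r'; simp only [runsOf, K, Finset.mem_filter, Set.mem_setOf_eq, hS2]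
    constructor
    · rintro ⟨h', k, -, hk⟩
      exact ⟨h', by rwa [hsync r' h' r hr _ _ hk] at hk⟩
    · rintro ⟨h', hk⟩; exact ⟨h', m + 1, h', hk⟩
  have e3 : runsOf ℛ (U ∩ K ℛ r (m + 1)) = S2U := by
    ext r'; simp only [runsOf, K, Finset.mem_filter, Set.mem_inter_iff,
      Set.mem_setOf_eq, hS2U]
    constructor
    · rintro ⟨h', k, hUk, -, hk⟩
      refine ⟨h', by rwa [hsync r' h' r hr _ _ hk] at hk, hU r' k 0 hUk⟩
    · rintro ⟨h', hk, hU0⟩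
      exact ⟨h', m + 1, hU r' 0 (m + 1) hU0, h', hk⟩
  have e4 : runsOf ℛ ((U ∩ Kminus ℛ r (m + 1)) ∩ K ℛ r m) = S2U := by
    ext r'; simp only [runsOf, K, Kminus, Finset.mem_filter, Set.mem_inter_iff,
      Set.mem_setOf_eq, hS2U]
    constructor
    · rintro ⟨h', k, ⟨hUk, -, hk1⟩, -, -⟩
      have hk : k + 1 = m + 1 := hsync r' h' r hr _ _ hk1
      refine ⟨h', by rwa [hk] at hk1, hU r' k 0 hUk⟩
    · rintro ⟨h', hk, hU0⟩
      exact ⟨h', m, ⟨hU r' 0 m hU0, h', hk⟩, h',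
        sync_recall_step ℛ hsync hrec r hr m r' h' hk⟩
  have e5 : runsOf ℛ (Kminus ℛ r (m + 1) ∩ K ℛ r m) = S2 := by
    ext r'; simp only [runsOf, K, Kminus, Finset.mem_filter, Set.mem_inter_iff,
      Set.mem_setOf_eq, hS2]
    constructor
    · rintro ⟨h', k, ⟨-, hk1⟩, -, -⟩
      have hk : k + 1 = m + 1 := hsync r' h' r hr _ _ hk1
      exact ⟨h', by rwa [hk] at hk1⟩
    · rintro ⟨h', hk⟩
      exact ⟨h', m, ⟨h', hk⟩, h', sync_recall_step ℛ hsync hrec r hr m r' h' hk⟩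
  rw [e1] at h1; rw [e2] at h2
  unfold prPt
  rw [e1, e2, e3, e4, e5]
  rw [div_div_div_comm, div_self (ne_of_gt h1), div_one]

end SBP
end

section
/- If the agent has perfect recall, then every run passing through the information set K(r,m+1) also passes through the information set K(r,m): for every point (r,m), ℛ(K(r,m+1)) ⊆ ℛ(K(r,m)). That is, if r'(m') = r(m+1) for some time m', then r'(k) = r(m) for some time k. -/
open scoped Classical

namespace SBP

variable {L : Type*}

private lemma mem_destutter'_ne {α : Type*} :
    ∀ (l : List α) (a x : α), x ∈ a :: l → x ∈ l.destutter' (· ≠ ·) a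
  | [], a, x, h => by simpa using h
  | b :: l, a, x, h => by
    rw [List.destutter']
    by_cases hab : a ≠ b
    · simp only [if_pos hab]
      rcases List.mem_cons.1 h with h | h
      · exact h ▸ List.mem_cons_self
      · exact List.mem_cons_of_mem _ (mem_destutter'_ne l b x h)
    · push_neg at hab
      simp only [if_neg (show ¬ a ≠ b by simpa using hab)]
      rcases List.mem_cons.1 h with h | h
      · exact mem_destutter'_ne l a x (h ▸ List.mem_cons_self)
      · rcases List.mem_cons.1 h with h | h
        · exact mem_destutter'_ne l a x ((h.trans hab.symm) ▸ List.mem_cons_self)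
        · exact mem_destutter'_ne l a x (List.mem_cons_of_mem _ h)

private lemma mem_destutter_ne {α : Type*} (l : List α) (x : α)
    (h : x ∈ l) : x ∈ l.destutter (· ≠ ·) := by
  cases l with
  | nil => simpa using h
  | cons a l => exact mem_destutter'_ne l a x h

/-- `r m` is a value of `lseq r (m+1)`. -/
private lemma rm_mem_lseq (r : ℕ → L) (m : ℕ) : r m ∈ lseq r (m + 1) := by
  apply mem_destutter_ne
  simp only [List.mem_map, List.mem_range]
  exact ⟨m, by omega, rfl⟩

private lemma lseq_mem_range (r : ℕ → L) (m : ℕ) (x : L)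
    (h : x ∈ lseq r m) : ∃ k, r k = x := by
  have := (List.destutter_sublist (· ≠ ·) ((List.range (m + 1)).map r)).subset h
  simp only [List.mem_map, List.mem_range] at this
  obtain ⟨k, _, hk⟩ := this
  exact ⟨k, hk⟩

/-- With perfect recall, every run passing through `K(r,m+1)` also passes through
`K(r,m)`: that is, `ℛ(K(r,m+1)) ⊆ ℛ(K(r,m))`. -/
theorem runs_through_next_info_set (ℛ : Finset (ℕ → L)) (hne : ℛ.Nonempty)
    (hrec : PerfectRecall ℛ)
    (r : ℕ → L) (hr : r ∈ ℛ) (m : ℕ) :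
    runsOf ℛ (K ℛ r (m + 1)) ⊆ runsOf ℛ (K ℛ r m) ∧
    ∀ r' ∈ ℛ, ∀ m' : ℕ, r' m' = r (m + 1) → ∃ k : ℕ, r' k = r m := by
  classical
  have key : ∀ r' ∈ ℛ, ∀ m' : ℕ, r' m' = r (m + 1) → ∃ k : ℕ, r' k = r m := by
    intro r' hr' m' hm'
    have hseq : lseq r (m + 1) = lseq r' m' := hrec r hr r' hr' (m + 1) m' hm'.symm
    have hmem : r m ∈ lseq r' m' := hseq ▸ rm_mem_lseq r m
    obtain ⟨k, hk⟩ := lseq_mem_range r' m' (r m) hmem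
    exact ⟨k, hk⟩
  refine ⟨?_, key⟩
  intro r' hr'
  simp only [runsOf, Finset.mem_filter, K, Set.mem_setOf_eq] at hr' ⊢
  obtain ⟨h1, m', _, h3⟩ := hr'
  obtain ⟨k, hk⟩ := key r' h1 m' h3
  exact ⟨h1, k, h1, hk⟩

end SBP
end

section
/- Let ℛ be a (not necessarily synchronous) system in which the agent has perfect recall, let U be a run-based event, and let (r,m) be a point with Pr(ℛ(K(r,m))) > 0 and Pr(ℛ(K(r,m+1))) > 0. Define K(r,m+1)^{(r,m)} = {(r',k) ∈ K(r,m) : r' ∈ ℛ(K(r,m+1))}. Then the HT probabilities update by conditioning: Pr^HT_{(r,m+1)}(U) = Pr(ℛ(U) ∩ ℛ(K(r,m+1)^{(r,m)})) / Pr(ℛ(K(r,m+1)^{(r,m)})), i.e., Pr^HT_{(r,m+1)}(U) equals the conditional probability, with respect to Pr^HT_{(r,m)}, of U given the set of points in K(r,m) lying on runs the agent still considers possible at (r,m+1). -/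
open scoped Classical

namespace SBP

variable {L : Type*}

/-- `K(r,m+1)^{(r,m)}`: the points of `K(r,m)` lying on runs the agent still
considers possible at `(r,m+1)`. -/
def Ksup (ℛ : Finset (ℕ → L)) (r : ℕ → L) (m : ℕ) : Set (Point L) :=
  {p ∈ K ℛ r m | p.1 ∈ runsOf ℛ (K ℛ r (m + 1))}

/-- The HT probability at `(r,m)` of a run-based event `U`:
`Pr^HT_{(r,m)}(U) = Pr(ℛ(U) ∩ ℛ(K(r,m))) / Pr(ℛ(K(r,m)))`. -/
noncomputable def prHT (ℛ : Finset (ℕ → L)) (pr : (ℕ → L) → ℝ) (r : ℕ → L) (m : ℕ)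
    (U : Set (Point L)) : ℝ :=
  PrS pr (runsOf ℛ U ∩ runsOf ℛ (K ℛ r m)) / PrS pr (runsOf ℛ (K ℛ r m))

theorem _root_.List.mem_destutter'_of_mem {α : Type*} {R : α → α → Prop} [DecidableRel R]
    (hR : ∀ a b, ¬R a b → a = b) {x : α} :
    ∀ {l : List α} {a : α}, x ∈ a :: l → x ∈ l.destutter' R a
  | [], _, hx => by simpa using hx
  | b :: l, a, hx => by
    by_cases hab : R a b
    · rw [List.destutter'_cons_pos _ hab]
      rcases List.mem_cons.1 hx with rfl | hx
      · exact List.mem_cons_self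
      · exact List.mem_cons_of_mem _ (List.mem_destutter'_of_mem hR hx)
    · obtain rfl := hR a b hab
      rw [List.destutter'_cons_neg _ hab]
      exact List.mem_destutter'_of_mem hR (by simpa using hx)

theorem _root_.List.mem_destutter_of_mem {α : Type*} {R : α → α → Prop} [DecidableRel R]
    (hR : ∀ a b, ¬R a b → a = b) {x : α} : ∀ {l : List α}, x ∈ l → x ∈ l.destutter R
  | _ :: _, hx => List.mem_destutter'_of_mem hR hx

theorem mem_lseq_iff {r : ℕ → L} {m : ℕ} {x : L} : x ∈ lseq r m ↔ ∃ k ≤ m, r k = x := by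
  constructor
  · intro hx
    obtain ⟨k, hk, rfl⟩ := List.mem_map.1 ((List.destutter_sublist _ _).mem hx)
    exact ⟨k, Nat.lt_succ_iff.1 (List.mem_range.1 hk), rfl⟩
  · rintro ⟨k, hk, rfl⟩
    exact List.mem_destutter_of_mem (fun _ _ => not_not.1)
      (List.mem_map_of_mem (List.mem_range.2 (Nat.lt_succ_of_le hk)))

-- `r m` occurs in the local-state sequence of `r` at `m + 1`, which perfect recall
-- makes the local-state sequence of `r'` at `k`.
theorem PerfectRecall.exists_eq_of_eq_succ {ℛ : Finset (ℕ → L)} (hrec : PerfectRecall ℛ)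
    {r r' : ℕ → L} (hr : r ∈ ℛ) (hr' : r' ∈ ℛ) {m k : ℕ} (hk : r' k = r (m + 1)) :
    ∃ k', r' k' = r m := by
  have hmem : r m ∈ lseq r' k := by
    rw [hrec r' hr' r hr k (m + 1) hk]
    exact mem_lseq_iff.2 ⟨m, m.le_succ, rfl⟩
  obtain ⟨k', -, hk'⟩ := mem_lseq_iff.1 hmem
  exact ⟨k', hk'⟩

theorem runsOf_Ksup {ℛ : Finset (ℕ → L)} (hrec : PerfectRecall ℛ) {r : ℕ → L} (hr : r ∈ ℛ)
    (m : ℕ) : runsOf ℛ (Ksup ℛ r m) = runsOf ℛ (K ℛ r (m + 1)) := by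
  ext r'
  simp only [runsOf, Ksup, K, Finset.mem_filter, Set.mem_ofPred]
  constructor
  · rintro ⟨hr', -, -, hnext⟩
    exact ⟨hr', hnext.2⟩
  · rintro ⟨hr', hnext⟩
    obtain ⟨k, -, hk⟩ := hnext
    obtain ⟨k', hk'⟩ := hrec.exists_eq_of_eq_succ hr hr' hk
    exact ⟨hr', k', ⟨hr', hk'⟩, hr', k, hr', hk⟩

theorem update_by_conditioning_HT_general (ℛ : Finset (ℕ → L))
    (hrec : PerfectRecall ℛ)
    (pr : (ℕ → L) → ℝ)
    (U : Set (Point L))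
    (r : ℕ → L) (hr : r ∈ ℛ) (m : ℕ) :
    prHT ℛ pr r (m + 1) U =
      PrS pr (runsOf ℛ U ∩ runsOf ℛ (Ksup ℛ r m)) / PrS pr (runsOf ℛ (Ksup ℛ r m)) := by
  rw [prHT, runsOf_Ksup hrec hr m]

/-- In a (not necessarily synchronous) system with perfect recall, the HT probabilities
update by conditioning: `Pr^HT_{(r,m+1)}(U)` equals the conditional probability of `U`
given `K(r,m+1)^{(r,m)}`, for every run-based event `U`. -/
theorem update_by_conditioning_HT (ℛ : Finset (ℕ → L)) (hne : ℛ.Nonempty)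
    (hrec : PerfectRecall ℛ)
    (pr : (ℕ → L) → ℝ) (hnn : ∀ r' ∈ ℛ, 0 ≤ pr r') (hsum : ∑ r' ∈ ℛ, pr r' = 1)
    (U : Set (Point L)) (hU : RunBased U)
    (r : ℕ → L) (hr : r ∈ ℛ) (m : ℕ)
    (h1 : 0 < PrS pr (runsOf ℛ (K ℛ r m)))
    (h2 : 0 < PrS pr (runsOf ℛ (K ℛ r (m + 1)))) :
    prHT ℛ pr r (m + 1) U =
      PrS pr (runsOf ℛ U ∩ runsOf ℛ (Ksup ℛ r m)) / PrS pr (runsOf ℛ (Ksup ℛ r m)) :=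
  update_by_conditioning_HT_general ℛ hrec pr U r hr m

end SBP
end

section
/- In a synchronous system in which the agent has perfect recall, for every point (r,m) the two candidate conditioning sets coincide: K(r,m+1)^{(r,m)} = K(r,m+1)⁻, where K(r,m+1)⁻ = {(r',k) : (r',k+1) ∈ K(r,m+1)} and K(r,m+1)^{(r,m)} = {(r',k) ∈ K(r,m) : r' ∈ ℛ(K(r,m+1))}. -/
open scoped Classical

namespace SBP

variable {L : Type*}

theorem PerfectRecall.eq_of_le {ℛ : Finset (ℕ → L)} (hsync : Synchronous ℛ)
    (hrec : PerfectRecall ℛ) {r r' : ℕ → L} (hr : r ∈ ℛ) (hr' : r' ∈ ℛ) {n k : ℕ}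
    (h : r' n = r n) (hk : k ≤ n) : r' k = r k := by
  have hseq := hrec r' hr' r hr n n h
  rw [lseq_of_injective (hsync.injective hr'), lseq_of_injective (hsync.injective hr)] at hseq
  have hk' : k < ((List.range (n + 1)).map r').length := by simp; omega
  simpa using List.getElem_of_eq hseq hk'

theorem Ksup_eq_Kminus_general (ℛ : Finset (ℕ → L))
    (hsync : Synchronous ℛ) (hrec : PerfectRecall ℛ)
    (r : ℕ → L) (hr : r ∈ ℛ) (m : ℕ) :
    Ksup ℛ r m = Kminus ℛ r (m + 1) := by
  ext ⟨r', k⟩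
  constructor
  · rintro ⟨⟨hr', hk⟩, hrun⟩
    obtain ⟨-, m', -, hm'⟩ := Finset.mem_filter.1 hrun
    obtain rfl : k = m := hsync r' hr' r hr k m hk
    obtain rfl : m' = k + 1 := hsync r' hr' r hr m' (k + 1) hm'
    exact ⟨hr', hm'⟩
  · rintro ⟨hr', hk⟩
    obtain rfl : k = m := Nat.succ_injective (hsync r' hr' r hr (k + 1) (m + 1) hk)
    exact ⟨⟨hr', hrec.eq_of_le hsync hr hr' hk k.le_succ⟩,
      Finset.mem_filter.2 ⟨hr', k + 1, hr', hk⟩⟩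

/-- In a synchronous system with perfect recall, the two candidate conditioning sets
coincide: `K(r,m+1)^{(r,m)} = K(r,m+1)⁻`. -/
theorem Ksup_eq_Kminus (ℛ : Finset (ℕ → L)) (hne : ℛ.Nonempty)
    (hsync : Synchronous ℛ) (hrec : PerfectRecall ℛ)
    (r : ℕ → L) (hr : r ∈ ℛ) (m : ℕ) :
    Ksup ℛ r m = Kminus ℛ r (m + 1) :=
  Ksup_eq_Kminus_general ℛ hsync hrec r hr m

end SBP
end

section
/- If the agent has perfect recall, then for all runs r₁, r₂ ∈ ℛ and every time m, the sets of runs passing through the information sets K(r₁,m) and K(r₂,m) are nested or disjoint: either ℛ(K(r₁,m)) ⊆ ℛ(K(r₂,m)), or ℛ(K(r₂,m)) ⊆ ℛ(K(r₁,m)), or ℛ(K(r₁,m)) ∩ ℛ(K(r₂,m)) = ∅. -/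
open scoped Classical

namespace List

variable {α : Type*}

theorem destutter'_ne_append_singleton (a b : α) (l : List α) :
    (l ++ [b]).destutter' (· ≠ ·) a =
      if (a :: l).getLast (cons_ne_nil a l) = b then l.destutter' (· ≠ ·) a
      else l.destutter' (· ≠ ·) a ++ [b] := by
  induction l generalizing a with
  | nil => by_cases h : a = b <;> simp [h]
  | cons c l ih =>
    by_cases h : a = c
    · subst h
      simpa [destutter'_cons] using ih a
    · rw [cons_append, destutter'_cons_pos _ h, destutter'_cons_pos _ h, ih c,
        getLast_cons_cons]
      split_ifs <;> rfl

theorem destutter_ne_append_singleton (b : α) {l : List α} (hl : l ≠ []) :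
    (l ++ [b]).destutter (· ≠ ·) =
      if l.getLast hl = b then l.destutter (· ≠ ·) else l.destutter (· ≠ ·) ++ [b] := by
  obtain ⟨a, l, rfl⟩ := exists_cons_of_ne_nil hl
  simp only [cons_append, destutter_cons', destutter'_ne_append_singleton]

end List

namespace SBP

variable {L : Type*}

theorem lseq_zero (r : ℕ → L) : lseq r 0 = [r 0] := by
  simp [lseq, List.destutter_singleton]

theorem lseq_succ (r : ℕ → L) (m : ℕ) :
    lseq r (m + 1) = if r m = r (m + 1) then lseq r m else lseq r m ++ [r (m + 1)] := by
  rw [lseq, List.range_succ, List.map_append, List.map_singleton,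
    List.destutter_ne_append_singleton _ (by simp), List.getLast_map, List.getLast_range]
  rfl

theorem lseq_getLast? (r : ℕ → L) (m : ℕ) : (lseq r m).getLast? = some (r m) := by
  induction m with
  | zero => simp [lseq_zero]
  | succ m ih =>
    rw [lseq_succ]
    split_ifs with h
    · rw [ih, h]
    · simp

theorem lseq_ne_nil (r : ℕ → L) (m : ℕ) : lseq r m ≠ [] :=
  List.getLast?_isSome.mp (by simp [lseq_getLast?])

theorem eq_of_lseq_eq {r r' : ℕ → L} {m m' : ℕ} (h : lseq r m = lseq r' m') : r m = r' m' := by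
  simpa [lseq_getLast?] using congrArg List.getLast? h

theorem lseq_prefix_lseq (r : ℕ → L) {k m : ℕ} (h : k ≤ m) : lseq r k <+: lseq r m := by
  induction m, h using Nat.le_induction with
  | base => exact List.prefix_rfl
  | succ m _ ih =>
    rw [lseq_succ]
    split_ifs
    · exact ih
    · exact ih.trans (List.prefix_append _ _)

theorem exists_lseq_eq_of_prefix (r : ℕ → L) {l : List L} (hl : l ≠ []) :
    ∀ {m : ℕ}, l <+: lseq r m → ∃ j, lseq r j = l
  | 0, h => by
    rw [lseq_zero, ← List.nil_append [r 0], List.prefix_concat_iff, List.prefix_nil] at h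
    exact ⟨0, by simpa [lseq_zero] using h.resolve_right hl |>.symm⟩
  | m + 1, h => by
    rw [lseq_succ] at h
    split_ifs at h with hm
    · exact exists_lseq_eq_of_prefix r hl h
    · rcases List.prefix_concat_iff.mp h with rfl | h
      · exact ⟨m + 1, by rw [lseq_succ, if_neg hm]⟩
      · exact exists_lseq_eq_of_prefix r hl h

theorem exists_eq_of_lseq_prefix {r r' : ℕ → L} {m m' : ℕ} (h : lseq r' m' <+: lseq r m) :
    ∃ j, r j = r' m' :=
  (exists_lseq_eq_of_prefix r (lseq_ne_nil r' m') h).imp fun _ => eq_of_lseq_eq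

theorem mem_runsOf_K {ℛ : Finset (ℕ → L)} {r r' : ℕ → L} {m : ℕ} :
    r' ∈ runsOf ℛ (K ℛ r m) ↔ r' ∈ ℛ ∧ ∃ m', r' m' = r m := by
  simp [runsOf, K]

theorem runsOf_K_subset_of_lseq_prefix {ℛ : Finset (ℕ → L)} (hrec : PerfectRecall ℛ)
    {r₁ r₂ : ℕ → L} (hr₂ : r₂ ∈ ℛ) {m₁ m₂ : ℕ} (h : lseq r₁ m₁ <+: lseq r₂ m₂) :
    runsOf ℛ (K ℛ r₂ m₂) ⊆ runsOf ℛ (K ℛ r₁ m₁) := by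
  intro r' hr'
  obtain ⟨hr'ℛ, k, hk⟩ := mem_runsOf_K.mp hr'
  rw [← hrec r' hr'ℛ r₂ hr₂ k m₂ hk] at h
  exact mem_runsOf_K.mpr ⟨hr'ℛ, exists_eq_of_lseq_prefix h⟩

theorem runs_nested_or_disjoint_general (ℛ : Finset (ℕ → L))
    (hrec : PerfectRecall ℛ)
    (r₁ : ℕ → L) (hr₁ : r₁ ∈ ℛ) (r₂ : ℕ → L) (hr₂ : r₂ ∈ ℛ) (m : ℕ) :
    runsOf ℛ (K ℛ r₁ m) ⊆ runsOf ℛ (K ℛ r₂ m) ∨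
    runsOf ℛ (K ℛ r₂ m) ⊆ runsOf ℛ (K ℛ r₁ m) ∨
    runsOf ℛ (K ℛ r₁ m) ∩ runsOf ℛ (K ℛ r₂ m) = ∅ := by
  rcases (runsOf ℛ (K ℛ r₁ m) ∩ runsOf ℛ (K ℛ r₂ m)).eq_empty_or_nonempty with hdisj | ⟨r', hr'⟩
  · exact Or.inr (Or.inr hdisj)
  rw [Finset.mem_inter, mem_runsOf_K, mem_runsOf_K] at hr'
  obtain ⟨⟨hr'ℛ, m₁, h₁⟩, -, m₂, h₂⟩ := hr'
  have hl₁ := hrec r' hr'ℛ r₁ hr₁ m₁ m h₁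
  have hl₂ := hrec r' hr'ℛ r₂ hr₂ m₂ m h₂
  rcases le_total m₁ m₂ with h | h
  · refine Or.inr (Or.inl (runsOf_K_subset_of_lseq_prefix hrec hr₂ ?_))
    rw [← hl₁, ← hl₂]
    exact lseq_prefix_lseq r' h
  · refine Or.inl (runsOf_K_subset_of_lseq_prefix hrec hr₁ ?_)
    rw [← hl₁, ← hl₂]
    exact lseq_prefix_lseq r' h

/-- With perfect recall, the sets of runs passing through two information sets at the
same time are nested or disjoint. -/
theorem runs_nested_or_disjoint (ℛ : Finset (ℕ → L)) (hne : ℛ.Nonempty)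
    (hrec : PerfectRecall ℛ)
    (r₁ : ℕ → L) (hr₁ : r₁ ∈ ℛ) (r₂ : ℕ → L) (hr₂ : r₂ ∈ ℛ) (m : ℕ) :
    runsOf ℛ (K ℛ r₁ m) ⊆ runsOf ℛ (K ℛ r₂ m) ∨
    runsOf ℛ (K ℛ r₂ m) ⊆ runsOf ℛ (K ℛ r₁ m) ∨
    runsOf ℛ (K ℛ r₁ m) ∩ runsOf ℛ (K ℛ r₂ m) = ∅ :=
  runs_nested_or_disjoint_general ℛ hrec r₁ hr₁ r₂ hr₂ m

end SBP
end

section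
/- The Elga probability assignment does not update by conditioning, even in systems with perfect recall: in the Sleeping Beauty system ℛ₁ = {r₁, r₂} over local states L = {b, w, a}, where r₁(0) = b, r₁(1) = w, r₁(k) = a for k ≥ 2, and r₂(0) = b, r₂(1) = r₂(2) = w, r₂(k) = a for k ≥ 3, with Pr({r₁}) = Pr({r₂}) = 1/2, the agent has perfect recall, K(r₁,0) = {(r₁,0), (r₂,0)}, K(r₁,1)^{(r₁,0)} = {(r',k) ∈ K(r₁,0) : r' ∈ ℛ(K(r₁,1))} = K(r₁,0), and for the run-based event U consisting of all points on r₁ (the event 'heads'): Pr^Elga_{(r₁,1)}(U ∩ K(r₁,1)) = 1/3, whereas Pr^Elga_{(r₁,0)}(U ∩ K(r₁,1)^{(r₁,0)}) / Pr^Elga_{(r₁,0)}(K(r₁,1)^{(r₁,0)}) = 1/2; hence 1/3 = Pr^Elga_{(r₁,1)}(U) ≠ Pr^Elga_{(r₁,0)}(U | K(r₁,1)^{(r₁,0)}) = 1/2. -/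
open scoped Classical

namespace SBP

variable {L : Type*}

/-- The Elga probability, at the point `(r,m)`, of a set `V` of points. -/
noncomputable def elgaSet (ℛ : Finset (ℕ → L)) (pr : (ℕ → L) → ℝ) (r : ℕ → L) (m : ℕ)
    (V : Set (Point L)) : ℝ :=
  ∑ᶠ p ∈ V, elga ℛ pr r m p

section Aux

variable {L : Type*}

lemma destutter'_replicate (x : L) (n : ℕ) :
    List.destutter' (· ≠ ·) x (List.replicate n x) = [x] := by
  induction n with
  | zero => simp [List.destutter'_nil]
  | succ n ih => simp [List.replicate_succ, List.destutter'_cons, ih]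

end Aux

/-- In the Sleeping Beauty system the Elga probabilities do not update by conditioning,
even though the agent has perfect recall: for the run-based event `U` of all points on
`r₁` (heads), `Pr^Elga_{(r₁,1)}(U) = 1/3` while
`Pr^Elga_{(r₁,0)}(U | K(r₁,1)^{(r₁,0)}) = 1/2`. -/
theorem elga_not_conditioning (b w a : L) (hbw : b ≠ w) (hba : b ≠ a) (hwa : w ≠ a)
    (r₁ r₂ : ℕ → L)
    (hr₁0 : r₁ 0 = b) (hr₁1 : r₁ 1 = w) (hr₁a : ∀ k : ℕ, 2 ≤ k → r₁ k = a)
    (hr₂0 : r₂ 0 = b) (hr₂1 : r₂ 1 = w) (hr₂2 : r₂ 2 = w) (hr₂a : ∀ k : ℕ, 3 ≤ k → r₂ k = a)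
    (pr : (ℕ → L) → ℝ) (hpr₁ : pr r₁ = 1 / 2) (hpr₂ : pr r₂ = 1 / 2) :
    PerfectRecall ({r₁, r₂} : Finset (ℕ → L)) ∧
    RunBased {p : Point L | p.1 = r₁} ∧
    K ({r₁, r₂} : Finset (ℕ → L)) r₁ 0 = {(r₁, 0), (r₂, 0)} ∧
    Ksup ({r₁, r₂} : Finset (ℕ → L)) r₁ 0 = K ({r₁, r₂} : Finset (ℕ → L)) r₁ 0 ∧
    elgaSet {r₁, r₂} pr r₁ 1 ({p : Point L | p.1 = r₁} ∩ K {r₁, r₂} r₁ 1) = 1 / 3 ∧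
    elgaSet {r₁, r₂} pr r₁ 0 ({p : Point L | p.1 = r₁} ∩ Ksup {r₁, r₂} r₁ 0) /
        elgaSet {r₁, r₂} pr r₁ 0 (Ksup {r₁, r₂} r₁ 0) = 1 / 2 ∧
    elgaSet {r₁, r₂} pr r₁ 1 {p : Point L | p.1 = r₁} = 1 / 3 ∧
    elgaSet {r₁, r₂} pr r₁ 1 {p : Point L | p.1 = r₁} ≠
      elgaSet {r₁, r₂} pr r₁ 0 ({p : Point L | p.1 = r₁} ∩ Ksup {r₁, r₂} r₁ 0) /
        elgaSet {r₁, r₂} pr r₁ 0 (Ksup {r₁, r₂} r₁ 0) := by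
  classical
  -- basic disequalities
  have hwb : w ≠ b := hbw.symm
  have hab : a ≠ b := hba.symm
  have haw : a ≠ w := hwa.symm
  have hne : r₁ ≠ r₂ := by
    intro h
    apply haw
    have := hr₁a 2 le_rfl
    rw [h, hr₂2] at this
    exact this.symm
  -- value characterizations
  have h1b : ∀ k, r₁ k = b ↔ k = 0 := by
    intro k
    match k with
    | 0 => simp [hr₁0]
    | 1 => simp [hr₁1, hwb]
    | (n+2) => simp [hr₁a (n+2) (by omega), hab, Nat.add_eq_zero]
  have h1w : ∀ k, r₁ k = w ↔ k = 1 := by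
    intro k
    match k with
    | 0 => simp [hr₁0, hbw]
    | 1 => simp [hr₁1]
    | (n+2) => simp [hr₁a (n+2) (by omega), haw]
  have h2b : ∀ k, r₂ k = b ↔ k = 0 := by
    intro k
    match k with
    | 0 => simp [hr₂0]
    | 1 => simp [hr₂1, hwb]
    | 2 => simp [hr₂2, hwb]
    | (n+3) => simp [hr₂a (n+3) (by omega), hab, Nat.add_eq_zero]
  have h2w : ∀ k, r₂ k = w ↔ k = 1 ∨ k = 2 := by
    intro k
    match k with
    | 0 => simp [hr₂0, hbw]
    | 1 => simp [hr₂1]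
    | 2 => simp [hr₂2]
    | (n+3) => simp [hr₂a (n+3) (by omega), haw]
  -- lseq computations
  have hmap1 : ∀ n : ℕ, (List.range (n+3)).map r₁ = [b, w] ++ List.replicate (n+1) a := by
    intro n
    induction n with
    | zero =>
      show (List.range 3).map r₁ = _
      have : List.range 3 = [0,1,2] := rfl
      simp [this, hr₁0, hr₁1, hr₁a 2 le_rfl]
    | succ n ih =>
      rw [show n+1+3 = (n+3)+1 from rfl, List.range_succ, List.map_append, ih]
      simp [hr₁a (n+3) (by omega), List.replicate_succ']
  have hmap2 : ∀ n : ℕ, (List.range (n+4)).map r₂ = [b, w, w] ++ List.replicate (n+1) a := by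
    intro n
    induction n with
    | zero =>
      show (List.range 4).map r₂ = _
      have : List.range 4 = [0,1,2,3] := rfl
      simp [this, hr₂0, hr₂1, hr₂2, hr₂a 3 le_rfl]
    | succ n ih =>
      rw [show n+1+4 = (n+4)+1 from rfl, List.range_succ, List.map_append, ih]
      simp [hr₂a (n+4) (by omega), List.replicate_succ']
  have hls1 : ∀ m, lseq r₁ m = if r₁ m = b then [b] else if r₁ m = w then [b, w] else [b, w, a] := by
    intro m
    match m with
    | 0 =>
      rw [if_pos (by rw [hr₁0])]
      show List.destutter _ ((List.range 1).map r₁) = _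
      have : List.range 1 = [0] := rfl
      simp [this, hr₁0, List.destutter]
    | 1 =>
      rw [if_neg (by rw [hr₁1]; exact hwb), if_pos (by rw [hr₁1])]
      show List.destutter _ ((List.range 2).map r₁) = _
      have : List.range 2 = [0, 1] := rfl
      simp [this, hr₁0, hr₁1, List.destutter_cons_cons, hbw, List.destutter'_nil]
    | (n+2) =>
      rw [if_neg (by rw [hr₁a _ (by omega)]; exact hab),
        if_neg (by rw [hr₁a _ (by omega)]; exact haw)]
      show List.destutter _ ((List.range (n+3)).map r₁) = _
      rw [hmap1 n]
      simp only [List.cons_append, List.nil_append, List.replicate_succ]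
      rw [List.destutter_cons_cons, if_pos hbw, List.destutter'_cons, if_pos hwa,
        destutter'_replicate]
  have hls2 : ∀ m, lseq r₂ m = if r₂ m = b then [b] else if r₂ m = w then [b, w] else [b, w, a] := by
    intro m
    match m with
    | 0 =>
      rw [if_pos (by rw [hr₂0])]
      show List.destutter _ ((List.range 1).map r₂) = _
      have : List.range 1 = [0] := rfl
      simp [this, hr₂0, List.destutter]
    | 1 =>
      rw [if_neg (by rw [hr₂1]; exact hwb), if_pos (by rw [hr₂1])]
      show List.destutter _ ((List.range 2).map r₂) = _
      have : List.range 2 = [0, 1] := rfl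
      simp [this, hr₂0, hr₂1, List.destutter_cons_cons, hbw, List.destutter'_nil]
    | 2 =>
      rw [if_neg (by rw [hr₂2]; exact hwb), if_pos (by rw [hr₂2])]
      show List.destutter _ ((List.range 3).map r₂) = _
      have : List.range 3 = [0, 1, 2] := rfl
      simp [this, hr₂0, hr₂1, hr₂2, List.destutter_cons_cons, hbw,
        List.destutter'_cons, List.destutter'_nil]
    | (n+3) =>
      rw [if_neg (by rw [hr₂a _ (by omega)]; exact hab),
        if_neg (by rw [hr₂a _ (by omega)]; exact haw)]
      show List.destutter _ ((List.range (n+4)).map r₂) = _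
      rw [hmap2 n]
      simp only [List.cons_append, List.nil_append, List.replicate_succ]
      rw [List.destutter_cons_cons, if_pos hbw, List.destutter'_cons, if_neg (by simp),
        List.destutter'_cons, if_pos hwa, destutter'_replicate]
  have hPR : PerfectRecall ({r₁, r₂} : Finset (ℕ → L)) := by
    intro r hr r' hr' m m' heq
    have key : ∀ s ∈ ({r₁, r₂} : Finset (ℕ → L)), ∀ k,
        lseq s k = if s k = b then [b] else if s k = w then [b, w] else [b, w, a] := by
      intro s hs k
      rcases Finset.mem_insert.1 hs with rfl | hs
      · exact hls1 k
      · rw [Finset.mem_singleton.1 hs]; exact hls2 k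
    rw [key r hr m, key r' hr' m', heq]
  -- runsOf computations
  have hr₁mem : r₁ ∈ ({r₁, r₂} : Finset (ℕ → L)) := Finset.mem_insert_self _ _
  have hr₂mem : r₂ ∈ ({r₁, r₂} : Finset (ℕ → L)) :=
    Finset.mem_insert_of_mem (Finset.mem_singleton_self _)
  have hruns1 : runsOf ({r₁, r₂} : Finset (ℕ → L)) (K {r₁, r₂} r₁ 1) = {r₁, r₂} := by
    apply Finset.filter_true_of_mem
    intro s hs
    rcases Finset.mem_insert.1 hs with rfl | hs
    · exact ⟨1, hr₁mem, rfl⟩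
    · rw [Finset.mem_singleton.1 hs]
      exact ⟨1, hr₂mem, show r₂ 1 = r₁ 1 by rw [hr₂1, hr₁1]⟩
  have hruns0 : runsOf ({r₁, r₂} : Finset (ℕ → L)) (K {r₁, r₂} r₁ 0) = {r₁, r₂} := by
    apply Finset.filter_true_of_mem
    intro s hs
    rcases Finset.mem_insert.1 hs with rfl | hs
    · exact ⟨0, hr₁mem, rfl⟩
    · rw [Finset.mem_singleton.1 hs]
      exact ⟨0, hr₂mem, show r₂ 0 = r₁ 0 by rw [hr₂0, hr₁0]⟩
  -- set identities
  have hK0 : K ({r₁, r₂} : Finset (ℕ → L)) r₁ 0 = {(r₁, 0), (r₂, 0)} := by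
    ext ⟨s, k⟩
    simp only [K, Set.mem_setOf_eq, hr₁0, Set.mem_insert_iff, Set.mem_singleton_iff,
      Prod.mk.injEq, Finset.mem_insert, Finset.mem_singleton]
    constructor
    · rintro ⟨rfl | rfl, hv⟩
      · exact Or.inl ⟨rfl, (h1b k).1 hv⟩
      · exact Or.inr ⟨rfl, (h2b k).1 hv⟩
    · rintro (⟨rfl, rfl⟩ | ⟨rfl, rfl⟩)
      · exact ⟨Or.inl rfl, hr₁0⟩
      · exact ⟨Or.inr rfl, hr₂0⟩
  have hKsup : Ksup ({r₁, r₂} : Finset (ℕ → L)) r₁ 0 = K ({r₁, r₂} : Finset (ℕ → L)) r₁ 0 := by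
    ext p
    simp only [Ksup, Set.mem_setOf_eq, hruns1]
    constructor
    · rintro ⟨h, -⟩; exact h
    · intro h; exact ⟨h, h.1⟩
  have hUK1 : {p : Point L | p.1 = r₁} ∩ K {r₁, r₂} r₁ 1 = {((r₁, 1) : Point L)} := by
    ext ⟨s, k⟩
    simp only [Set.mem_inter_iff, Set.mem_setOf_eq, K, hr₁1, Set.mem_singleton_iff,
      Prod.mk.injEq]
    constructor
    · rintro ⟨rfl, -, hv⟩
      exact ⟨rfl, (h1w k).1 hv⟩
    · rintro ⟨rfl, rfl⟩
      exact ⟨rfl, hr₁mem, hr₁1⟩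
  have hUK0 : {p : Point L | p.1 = r₁} ∩ Ksup {r₁, r₂} r₁ 0 = {((r₁, 0) : Point L)} := by
    rw [hKsup, hK0]
    ext ⟨s, k⟩
    simp only [Set.mem_inter_iff, Set.mem_setOf_eq, Set.mem_insert_iff,
      Set.mem_singleton_iff, Prod.mk.injEq]
    constructor
    · rintro ⟨rfl, ⟨-, rfl⟩ | ⟨h, -⟩⟩
      · exact ⟨rfl, rfl⟩
      · exact absurd h hne
    · rintro ⟨rfl, rfl⟩
      exact ⟨rfl, Or.inl ⟨rfl, rfl⟩⟩
  -- npts computations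
  have hnpts : ∀ (s : ℕ → L) (S : Set ℕ), {k : ℕ | s k = r₁ 1} = S → npts r₁ 1 s = S.ncard := by
    intro s S h
    rw [npts, h, Nat.card_coe_set_eq]
  have nA : npts r₁ 1 r₁ = 1 := by
    rw [npts, hr₁1, show {k : ℕ | r₁ k = w} = {1} by ext k; simpa using h1w k,
      Nat.card_coe_set_eq, Set.ncard_singleton]
  have nB : npts r₁ 1 r₂ = 2 := by
    rw [npts, hr₁1, show {k : ℕ | r₂ k = w} = {1, 2} by ext k; simpa using h2w k,
      Nat.card_coe_set_eq, Set.ncard_pair (by norm_num)]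
  have nC : npts r₁ 0 r₁ = 1 := by
    rw [npts, hr₁0, show {k : ℕ | r₁ k = b} = {0} by ext k; simpa using h1b k,
      Nat.card_coe_set_eq, Set.ncard_singleton]
  have nD : npts r₁ 0 r₂ = 1 := by
    rw [npts, hr₁0, show {k : ℕ | r₂ k = b} = {0} by ext k; simpa using h2b k,
      Nat.card_coe_set_eq, Set.ncard_singleton]
  -- denominators
  have hden1 : ∑ r'' ∈ runsOf ({r₁, r₂} : Finset (ℕ → L)) (K {r₁, r₂} r₁ 1),
      pr r'' * (npts r₁ 1 r'' : ℝ) = 3 / 2 := by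
    rw [hruns1, Finset.sum_pair hne, nA, nB, hpr₁, hpr₂]; norm_num
  have hden0 : ∑ r'' ∈ runsOf ({r₁, r₂} : Finset (ℕ → L)) (K {r₁, r₂} r₁ 0),
      pr r'' * (npts r₁ 0 r'' : ℝ) = 1 := by
    rw [hruns0, Finset.sum_pair hne, nC, nD, hpr₁, hpr₂]; norm_num
  -- elga values
  have e11 : elga {r₁, r₂} pr r₁ 1 (r₁, 1) = 1 / 3 := by
    rw [elga, if_pos ⟨hr₁mem, rfl⟩, hden1, hpr₁]; norm_num
  have e00 : elga {r₁, r₂} pr r₁ 0 (r₁, 0) = 1 / 2 := by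
    rw [elga, if_pos ⟨hr₁mem, rfl⟩, hden0, hpr₁]; norm_num
  have e00' : elga {r₁, r₂} pr r₁ 0 (r₂, 0) = 1 / 2 := by
    rw [elga, if_pos ⟨hr₂mem, show r₂ 0 = r₁ 0 by rw [hr₂0, hr₁0]⟩, hden0, hpr₂]; norm_num
  -- restrict finsum to the information set
  have hfin : ∀ (V : Set (Point L)) (m : ℕ),
      elgaSet {r₁, r₂} pr r₁ m V = elgaSet {r₁, r₂} pr r₁ m (V ∩ K {r₁, r₂} r₁ m) := by
    intro V m
    have hsub : Function.support (elga ({r₁, r₂} : Finset (ℕ → L)) pr r₁ m) ⊆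
        K {r₁, r₂} r₁ m := by
      intro p hp
      by_contra h
      exact hp (by rw [elga, if_neg h])
    unfold elgaSet
    rw [← finsum_mem_inter_support _ V, ← finsum_mem_inter_support _ (V ∩ K {r₁, r₂} r₁ m),
      Set.inter_assoc, Set.inter_eq_self_of_subset_right hsub]
  -- the Elga probabilities
  have hE1 : elgaSet {r₁, r₂} pr r₁ 1 ({p : Point L | p.1 = r₁} ∩ K {r₁, r₂} r₁ 1) = 1 / 3 := by
    rw [elgaSet, hUK1, finsum_mem_singleton, e11]
  have hE2 : elgaSet {r₁, r₂} pr r₁ 1 {p : Point L | p.1 = r₁} = 1 / 3 := by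
    rw [hfin, hE1]
  have hnum : elgaSet {r₁, r₂} pr r₁ 0 ({p : Point L | p.1 = r₁} ∩ Ksup {r₁, r₂} r₁ 0)
      = 1 / 2 := by
    rw [elgaSet, hUK0, finsum_mem_singleton, e00]
  have hdenE : elgaSet {r₁, r₂} pr r₁ 0 (Ksup {r₁, r₂} r₁ 0) = 1 := by
    have hpne : ((r₁, 0) : Point L) ≠ (r₂, 0) := by
      intro h
      exact hne (congrArg Prod.fst h)
    rw [elgaSet, hKsup, hK0, finsum_mem_pair hpne, e00, e00']
    norm_num
  refine ⟨hPR, ?_, hK0, hKsup, hE1, ?_, hE2, ?_⟩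
  · intro s k k' h
    exact h
  · rw [hnum, hdenE]; norm_num
  · rw [hE2, hnum, hdenE]; norm_num


end SBP
end
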